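/- For every integer n ≥ 1, the number of permutations π of length n such that Flatten(π) contains no occurrence of the pattern 13-2 equals 2^{n-1}. -/

import Mathlib

open Finset Polynomial

/-- The cycle of `π` starting at `m`: `m, π m, π² m, …` through one full period. -/
noncomputable def cycleList {n : ℕ} (π : Equiv.Perm (Fin n)) (m : Fin n) : List (Fin n) :=
  (List.range (Function.minimalPeriod π m)).map (fun k => (π ^ k) m)

/-- The minima of the cycles of `π`, listed in increasing order. -/
def cycleMins {n : ℕ} (π : Equiv.Perm (Fin n)) : List (Fin n) :=
  (Finset.univ.filter (fun m : Fin n => ∀ k < n, m ≤ (π ^ k) m)).sort (· ≤ ·)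

/-- The flattened permutation of `π`, as a word on the letters `1, …, n`:
erase the parentheses from the standard cycle form of `π`. -/
noncomputable def flattenPerm {n : ℕ} (π : Equiv.Perm (Fin n)) : List ℕ :=
  ((cycleMins π).map (cycleList π)).flatten.map (fun m => (m : ℕ) + 1)

/-- The number of occurrences of the pattern 13-2 in the word `w = w₁w₂⋯wₙ`
(1-based), i.e. the number of pairs `(i,j)` with `2 ≤ i < j ≤ n` and
`w_{i-1} < w_j < w_i`.  Below, `p.1` and `p.2` are the 0-based versions of `i` and `j`. -/
def occ (w : List ℕ) : ℕ :=
  ((Finset.range w.length ×ˢ Finset.range w.length).filter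
    (fun p : ℕ × ℕ => 1 ≤ p.1 ∧ p.1 < p.2 ∧
      w.getD (p.1 - 1) 0 < w.getD p.2 0 ∧ w.getD p.2 0 < w.getD p.1 0)).card

/-- `g_n = Σ_{π ∈ S_n} q^{occ(Flatten(π))} ∈ ℤ[q]`. -/
noncomputable def gPoly (n : ℕ) : Polynomial ℤ :=
  ∑ π : Equiv.Perm (Fin n), X ^ occ (flattenPerm π)

/-- `g_n(a₁⋯a_k)`: the sum of `q^{occ(Flatten(π))}` over the permutations `π` of length `n`
whose flattened permutation starts with the subword `a₁⋯a_k`. -/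
noncomputable def gPrefix (n : ℕ) (w : List ℕ) : Polynomial ℤ :=
  ∑ π ∈ Finset.univ.filter (fun π : Equiv.Perm (Fin n) => w <+: flattenPerm π),
    X ^ occ (flattenPerm π)

/-- `g_{n,r}(a₁⋯a_k)`: the number of permutations `π` of length `n` such that `Flatten(π)`
starts with `a₁⋯a_k` and has exactly `r` occurrences of the pattern 13-2. -/
noncomputable def gCount (n r : ℕ) (w : List ℕ) : ℕ :=
  (Finset.univ.filter (fun π : Equiv.Perm (Fin n) =>
    w <+: flattenPerm π ∧ occ (flattenPerm π) = r)).card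


/-! `Flatten(π)` is a rearrangement of `1, …, n` that begins with `1`, and such a word avoids
13-2 only if it is `12⋯n`: at the first position `i` where it deviates,
`w_{i-1} = i - 1 < i < w_i` and the letter `i` comes later. Since every cycle is written from
its minimum, `Flatten(π) = 12⋯n` exactly when `π x ≤ x + 1` for all `x`, i.e. when the cycles
are runs of consecutive integers. Cutting the largest letter out of its cycle shows that there
are twice as many such permutations of length `n + 1` as of length `n`. -/

open Equiv Function

section CycleForm

variable {n : ℕ} {π : Perm (Fin n)}

theorem coe_cycleList (π : Perm (Fin n)) (x : Fin n) :
    (cycleList π x : Cycle (Fin n)) = periodicOrbit π x := by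
  simp [cycleList, periodicOrbit, Perm.coe_pow]

theorem nodup_cycleList (π : Perm (Fin n)) (x : Fin n) : (cycleList π x).Nodup := by
  rw [← Cycle.nodup_coe_iff, coe_cycleList]
  exact nodup_periodicOrbit

theorem exists_lt_minimalPeriod_of_mem_cycleList {x y : Fin n} (h : y ∈ cycleList π x) :
    ∃ k < minimalPeriod π x, (π ^ k) x = y := by
  simpa [cycleList] using h

theorem mem_cycleList_iff {x y : Fin n} : y ∈ cycleList π x ↔ π.SameCycle x y := by
  rw [← Cycle.mem_coe_iff, coe_cycleList, mem_periodicOrbit_iff (π.injective.mem_periodicPts x)]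
  simp only [← Perm.coe_pow]
  exact ⟨fun ⟨k, hk⟩ => hk ▸ (Perm.SameCycle.refl π x).pow_right,
    Perm.SameCycle.exists_nat_pow_eq⟩

theorem mem_cycleMins_iff {m : Fin n} : m ∈ cycleMins π ↔ ∀ y, π.SameCycle m y → m ≤ y := by
  simp only [cycleMins, Finset.mem_sort, Finset.mem_filter, Finset.mem_univ, true_and]
  refine ⟨fun h y hy => ?_, fun h k _ => h _ (Perm.SameCycle.refl π m).pow_right⟩
  obtain ⟨k, hk, rfl⟩ := exists_lt_minimalPeriod_of_mem_cycleList (mem_cycleList_iff.2 hy)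
  exact h k (hk.trans_le (minimalPeriod_le_card.trans_eq (Fintype.card_fin n)))

theorem eq_of_mem_cycleMins_of_sameCycle {a b : Fin n} (ha : a ∈ cycleMins π)
    (hb : b ∈ cycleMins π) (h : π.SameCycle a b) : a = b :=
  le_antisymm (mem_cycleMins_iff.1 ha b h) (mem_cycleMins_iff.1 hb a h.symm)

theorem exists_mem_cycleMins_sameCycle (π : Perm (Fin n)) (x : Fin n) :
    ∃ m ∈ cycleMins π, π.SameCycle m x := by
  classical
  obtain ⟨m, hm, hmin⟩ :=
    (Finset.univ.filter (π.SameCycle x)).exists_min_image id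
      ⟨x, by simp [Perm.SameCycle.refl]⟩
  simp only [Finset.mem_filter, Finset.mem_univ, true_and, id] at hm hmin
  exact ⟨m, mem_cycleMins_iff.2 fun y hy => hmin y (hm.trans hy), hm.symm⟩

theorem pairwise_lt_cycleMins (π : Perm (Fin n)) : (cycleMins π).Pairwise (· < ·) :=
  (Finset.sortedLT_sort _).pairwise

noncomputable def cycleWord (π : Perm (Fin n)) : List (Fin n) :=
  ((cycleMins π).map (cycleList π)).flatten

theorem flattenPerm_eq_map_cycleWord (π : Perm (Fin n)) :
    flattenPerm π = (cycleWord π).map (fun m : Fin n => (m : ℕ) + 1) := by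
  simp [flattenPerm, cycleWord, ← List.map_eq_flatMap, comp_def]

theorem mem_cycleWord (π : Perm (Fin n)) (x : Fin n) : x ∈ cycleWord π := by
  obtain ⟨m, hm, hmx⟩ := exists_mem_cycleMins_sameCycle π x
  exact List.mem_flatten_of_mem (List.mem_map_of_mem hm) (mem_cycleList_iff.2 hmx)

theorem nodup_cycleWord (π : Perm (Fin n)) : (cycleWord π).Nodup := by
  rw [cycleWord, List.nodup_flatten, List.pairwise_map]
  refine ⟨by simpa using fun m _ => nodup_cycleList π m,
    (List.Pairwise.and_mem.1 (pairwise_lt_cycleMins π)).imp ?_⟩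
  rintro a b ⟨ha, hb, hab⟩
  refine List.disjoint_left.2 fun y hya hyb => hab.ne ?_
  exact eq_of_mem_cycleMins_of_sameCycle ha hb
    ((mem_cycleList_iff.1 hya).trans (mem_cycleList_iff.1 hyb).symm)

theorem cycleWord_perm_finRange (π : Perm (Fin n)) : (cycleWord π).Perm (List.finRange n) :=
  (List.perm_ext_iff_of_nodup (nodup_cycleWord π) (List.nodup_finRange n)).2
    (by simp [mem_cycleWord])

theorem exists_cycleWord_eq_zero_cons (π : Perm (Fin (n + 1))) :
    ∃ t, cycleWord π = 0 :: t := by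
  have h0 : 0 ∈ cycleMins π := mem_cycleMins_iff.2 fun y _ => Fin.zero_le y
  obtain ⟨a, l, hal⟩ := List.exists_cons_of_ne_nil (List.ne_nil_of_mem h0)
  have ha : a = 0 := by
    have hsort := pairwise_lt_cycleMins π
    rw [hal, List.pairwise_cons] at hsort
    rw [hal, List.mem_cons] at h0
    exact (h0.resolve_right fun h => (Fin.zero_le a).not_gt (hsort.1 0 h)).symm
  obtain ⟨p, hp⟩ := Nat.exists_eq_add_one_of_ne_zero
    (minimalPeriod_pos_of_mem_periodicPts (π.injective.mem_periodicPts 0)).ne'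
  refine ⟨((List.range p).map fun k => (π ^ (k + 1)) 0) ++ (l.map (cycleList π)).flatten, ?_⟩
  simp [cycleWord, hal, ha, cycleList, hp, List.range_succ_eq_map]

def SuccBounded (π : Perm (Fin n)) : Prop := ∀ x, (π x : ℕ) ≤ x + 1

instance : DecidablePred (@SuccBounded n) := fun π =>
  inferInstanceAs (Decidable (∀ x, (π x : ℕ) ≤ x + 1))

theorem succBounded_of_cycleWord_eq (h : cycleWord π = List.finRange n) : SuccBounded π := by
  intro x
  obtain ⟨m, hm, hmx⟩ := exists_mem_cycleMins_sameCycle π x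
  obtain ⟨k, hk, rfl⟩ := exists_lt_minimalPeriod_of_mem_cycleList (mem_cycleList_iff.2 hmx)
  rw [← Perm.mul_apply, ← pow_succ']
  rcases (Nat.add_one_le_of_lt hk).eq_or_lt with hlast | hk1
  · have : (π ^ (k + 1)) m = m := by
      rw [hlast, Perm.coe_pow, iterate_minimalPeriod]
    rw [this]
    have hmin := mem_cycleMins_iff.1 hm ((π ^ k) m) (Perm.SameCycle.refl π m).pow_right
    exact (Fin.le_def.1 hmin).trans (Nat.le_succ _)
  · have hchain : List.IsChain (fun a b : Fin n => (b : ℕ) = a + 1) (cycleList π m) := by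
      have hinfix : cycleList π m <:+: List.finRange n := by
        rw [← h]
        exact List.infix_of_mem_flatten (List.mem_map_of_mem hm)
      exact List.IsChain.infix (by simp [List.isChain_iff_getElem]) hinfix
    have hsucc := List.isChain_iff_getElem.1 hchain k (by simpa [cycleList] using hk1)
    simp only [cycleList, List.getElem_map, List.getElem_range] at hsucc
    exact hsucc.le

theorem val_pow_apply_of_succBounded (h : SuccBounded π) {m : Fin n} (hm : m ∈ cycleMins π)
    {k : ℕ} (hk : k < minimalPeriod π m) : ((π ^ k) m : ℕ) = m + k := by
  induction k using Nat.strong_induction_on with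
  | _ k ih =>
    rcases k with _ | k
    · simp
    have hprev := ih k (Nat.lt_succ_self k) (by omega)
    have hle : ((π ^ (k + 1)) m : ℕ) ≤ m + (k + 1) := by
      rw [pow_succ', Perm.mul_apply]
      exact (h _).trans_eq (by rw [hprev]; ring)
    have hge : (m : ℕ) ≤ (π ^ (k + 1)) m :=
      mem_cycleMins_iff.1 hm _ (Perm.SameCycle.refl π m).pow_right
    by_contra hne
    -- the value would repeat an earlier point of the cycle
    set j := ((π ^ (k + 1)) m : ℕ) - m
    have hj : (π ^ j) m = (π ^ (k + 1)) m := Fin.ext (by rw [ih j (by omega) (by omega)]; omega)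
    rw [Perm.coe_pow, Perm.coe_pow,
      iterate_eq_iterate_iff_of_lt_minimalPeriod (by omega) hk] at hj
    omega

theorem add_minimalPeriod_le_of_succBounded (h : SuccBounded π) {a b : Fin n}
    (ha : a ∈ cycleMins π) (hb : b ∈ cycleMins π) (hab : a < b) :
    (a : ℕ) + minimalPeriod π a ≤ b := by
  by_contra! hlt
  have hj : (π ^ ((b : ℕ) - a)) a = b :=
    Fin.ext (by rw [val_pow_apply_of_succBounded h ha (by omega)]; omega)
  refine hab.ne (eq_of_mem_cycleMins_of_sameCycle ha hb ?_)
  exact hj ▸ (Perm.SameCycle.refl π a).pow_right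

theorem cycleWord_eq_finRange_of_succBounded (h : SuccBounded π) :
    cycleWord π = List.finRange n := by
  refine List.SortedLT.eq_of_mem_iff ?_ (List.sortedLT_finRange n) (by simp [mem_cycleWord])
  rw [List.sortedLT_iff_pairwise, cycleWord, List.pairwise_flatten, List.pairwise_map]
  refine ⟨?_, (List.Pairwise.and_mem.1 (pairwise_lt_cycleMins π)).imp ?_⟩
  · simp only [List.mem_map, forall_exists_index, and_imp, forall_apply_eq_imp_iff₂]
    intro m hm
    rw [cycleList, List.pairwise_map]
    refine List.pairwise_lt_range.imp_of_mem fun {k l} hk hl hkl => ?_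
    rw [List.mem_range] at hk hl
    rw [Fin.lt_def, val_pow_apply_of_succBounded h hm hk, val_pow_apply_of_succBounded h hm hl]
    omega
  · rintro a b ⟨ha, hb, hab⟩ y hy z hz
    obtain ⟨k, hk, rfl⟩ := exists_lt_minimalPeriod_of_mem_cycleList hy
    obtain ⟨l, hl, rfl⟩ := exists_lt_minimalPeriod_of_mem_cycleList hz
    have := add_minimalPeriod_le_of_succBounded h ha hb hab
    rw [Fin.lt_def, val_pow_apply_of_succBounded h ha hk, val_pow_apply_of_succBounded h hb hl]
    omega

theorem succBounded_iff_cycleWord_eq : SuccBounded π ↔ cycleWord π = List.finRange n :=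
  ⟨cycleWord_eq_finRange_of_succBounded, succBounded_of_cycleWord_eq⟩

end CycleForm

theorem occ_eq_zero_iff {w : List ℕ} :
    occ w = 0 ↔ ∀ i j (_ : 1 ≤ i) (_ : i < j) (_ : j < w.length),
      ¬(w[i - 1] < w[j] ∧ w[j] < w[i]) := by
  simp only [occ, Finset.card_eq_zero, Finset.filter_eq_empty_iff, Finset.mem_product,
    Finset.mem_range, Prod.forall, not_and]
  refine ⟨fun h i j hi hij hj => ?_, fun h i j ⟨_, hj⟩ hi hij => ?_⟩
  · simpa [List.getD_eq_getElem, hj, show i < w.length by omega, show i - 1 < w.length by omega]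
      using h i j ⟨by omega, hj⟩ hi hij
  · simpa [List.getD_eq_getElem, hj, show i < w.length by omega, show i - 1 < w.length by omega]
      using h i j hi hij hj

theorem occ_eq_zero_of_sortedLT {w : List ℕ} (hw : w.SortedLT) : occ w = 0 :=
  occ_eq_zero_iff.2 fun _ _ _ hij _ hocc =>
    hocc.2.not_gt (hw.getElem_lt_getElem_iff.2 hij)

theorem eq_range'_of_occ_eq_zero {w : List ℕ} (hw : w.Perm (List.range' 1 w.length))
    (h₀ : w.head? = some 1) (hocc : occ w = 0) : w = List.range' 1 w.length := by
  have hnodup : w.Nodup := hw.nodup_iff.2 List.nodup_range'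
  have hmem : ∀ v, v ∈ w ↔ 1 ≤ v ∧ v < 1 + w.length := fun v => by
    rw [hw.mem_iff, List.mem_range'_1]
  suffices h : ∀ i (hi : i < w.length), w[i] = i + 1 by
    refine List.ext_getElem (by simp) fun i hi _ => ?_
    rw [h i hi, List.getElem_range']
    omega
  intro i
  induction i using Nat.strong_induction_on with
  | _ i ih =>
    intro hi
    rcases i with _ | i
    · simpa [List.head?_eq_getElem?, hi] using h₀
    have hwi := (hmem _).1 (List.getElem_mem hi)
    -- the letters `1, …, i + 1` already sit at the positions `0, …, i`
    have hge : i + 2 ≤ w[i + 1] := by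
      by_contra! hlt
      have := ih (w[i + 1] - 1) (by omega) (by omega)
      have := (hnodup.getElem_inj_iff (i := w[i + 1] - 1) (j := i + 1)).1 (by omega)
      omega
    by_contra hne
    obtain ⟨j, hj, hwj⟩ := List.mem_iff_getElem.1 ((hmem (i + 2)).2 ⟨by omega, by omega⟩)
    have hij : i + 1 < j := by
      by_contra! hji
      rcases hji.lt_or_eq with hji | rfl
      · have := ih j hji hj; omega
      · omega
    -- otherwise `w[i] = i + 1 < w[j] = i + 2 < w[i + 1]` is an occurrence of 13-2
    exact occ_eq_zero_iff.1 hocc (i + 1) j (by omega) hij hj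
      ⟨by simp only [hwj, Nat.add_sub_cancel, ih i (by omega) (by omega)]; omega, by omega⟩

theorem occ_flattenPerm_eq_zero_iff {n : ℕ} (π : Perm (Fin (n + 1))) :
    occ (flattenPerm π) = 0 ↔ SuccBounded π := by
  have hinj : Function.Injective fun m : Fin (n + 1) => (m : ℕ) + 1 :=
    (add_left_injective 1).comp Fin.val_injective
  have hid : (List.finRange (n + 1)).map (fun m : Fin (n + 1) => (m : ℕ) + 1) =
      List.range' 1 (n + 1) :=
    List.ext_getElem (by simp) fun i _ _ => by simp [add_comm]
  have hperm : (flattenPerm π).Perm (List.range' 1 (n + 1)) := by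
    rw [flattenPerm_eq_map_cycleWord, ← hid]
    exact (cycleWord_perm_finRange π).map _
  rw [succBounded_iff_cycleWord_eq, ← (List.map_injective_iff.2 hinj).eq_iff,
    ← flattenPerm_eq_map_cycleWord, hid]
  refine ⟨fun hocc => ?_, fun h => h ▸ occ_eq_zero_of_sortedLT ?_⟩
  · obtain ⟨t, ht⟩ := exists_cycleWord_eq_zero_cons π
    have hhead : (flattenPerm π).head? = some 1 := by simp [flattenPerm_eq_map_cycleWord, ht]
    have hlen : (flattenPerm π).length = n + 1 := by simpa using hperm.length_eq
    have h := eq_range'_of_occ_eq_zero (by rwa [hlen]) hhead hocc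
    rwa [hlen] at h
  · exact List.sortedLT_iff_pairwise.2 (List.pairwise_lt_range' 1)

section Counting

variable {n : ℕ}

-- Sends `π` to `(π last, π with last cut out of its cycle)`, with `none` standing for `last`.
def decomposeLast (n : ℕ) : Perm (Fin (n + 1)) ≃ Option (Fin n) × Perm (Fin n) :=
  finSuccEquivLast.permCongr.trans Perm.decomposeOption

theorem decomposeLast_symm_apply_castSucc (t : Option (Fin n)) (σ : Perm (Fin n))
    (i : Fin n) : (decomposeLast n).symm (t, σ) i.castSucc =
      if t = some (σ i) then Fin.last n else (σ i).castSucc := by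
  split_ifs with h
  · simp [decomposeLast, permCongr_apply, h]
  · simp [decomposeLast, permCongr_apply, swap_apply_of_ne_of_ne, Ne.symm h]

theorem succBounded_decomposeLast_symm_iff (t : Option (Fin (n + 1)))
    (σ : Perm (Fin (n + 1))) :
    SuccBounded ((decomposeLast (n + 1)).symm (t, σ)) ↔
      (t = none ∨ t = some (σ (Fin.last n))) ∧ SuccBounded σ := by
  rw [SuccBounded, Fin.forall_fin_succ']
  simp only [decomposeLast_symm_apply_castSucc, apply_ite Fin.val, Fin.val_last,
    Fin.val_castSucc]
  refine ⟨fun ⟨h, _⟩ => ⟨?_, fun i => ?_⟩,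
    fun ⟨ht, hσ⟩ => ⟨fun i => ?_, Nat.le_succ_of_le (Fin.is_le _)⟩⟩
  · rcases t with _ | u
    · exact Or.inl rfl
    · have hu := h (σ.symm u)
      rw [σ.apply_symm_apply, if_pos rfl] at hu
      have hlast : σ.symm u = Fin.last n := Fin.ext (by have := (σ.symm u).is_le; simp; omega)
      rw [← hlast, σ.apply_symm_apply]
      exact Or.inr rfl
  · by_cases hi : t = some (σ i)
    · have hi' := h i
      rw [if_pos hi] at hi'
      have := (σ i).is_le
      omega
    · simpa [hi] using h i
  · split_ifs with hi
    · have : i = Fin.last n := by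
        rcases ht with rfl | ht
        · simp at hi
        · exact σ.injective (Option.some_injective _ (hi.symm.trans ht))
      simp [this]
    · exact hσ i

theorem card_succBounded_succ (n : ℕ) :
    #{π : Perm (Fin (n + 2)) | SuccBounded π} =
      2 * #{σ : Perm (Fin (n + 1)) | SuccBounded σ} := by
  calc #{π : Perm (Fin (n + 2)) | SuccBounded π}
      = #{p : Option (Fin (n + 1)) × Perm (Fin (n + 1)) |
          (p.1 = none ∨ p.1 = some (p.2 (Fin.last n))) ∧ SuccBounded p.2} :=
        card_equiv (decomposeLast (n + 1)) fun π => by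
          simp [← succBounded_decomposeLast_symm_iff]
    _ = ∑ σ : Perm (Fin (n + 1)), if SuccBounded σ then 2 else 0 := by
        rw [card_filter, Fintype.sum_prod_type_right]
        refine Finset.sum_congr rfl fun σ _ => ?_
        by_cases hσ : SuccBounded σ
        · simp only [hσ, and_true, ← card_filter, if_true]
          exact card_eq_two.2 ⟨none, some (σ (Fin.last n)), by simp, by ext; simp⟩
        · simp [hσ]
    _ = 2 * #{σ : Perm (Fin (n + 1)) | SuccBounded σ} := by
        rw [card_filter, Finset.mul_sum]
        simp

theorem card_succBounded (n : ℕ) : #{π : Perm (Fin (n + 1)) | SuccBounded π} = 2 ^ n := by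
  induction n with
  | zero => simp [SuccBounded]
  | succ n ih => rw [card_succBounded_succ, ih, pow_succ']
end Counting

/-- For every `n ≥ 1`, the number of permutations `π` of length `n` such that
`Flatten(π)` avoids the pattern 13-2 equals `2^{n-1}`. -/
theorem card_avoiders (n : ℕ) (hn : 1 ≤ n) :
    ((Finset.univ : Finset (Equiv.Perm (Fin n))).filter
        (fun π => occ (flattenPerm π) = 0)).card = 2 ^ (n - 1) := by
  obtain ⟨m, rfl⟩ := Nat.exists_eq_add_of_le' hn
  rw [Nat.add_sub_cancel, ← card_succBounded m]
  exact congrArg card (filter_congr fun π _ => occ_flattenPerm_eq_zero_iff π)
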